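/- Let R be a finite-dimensional G-graded algebra over an algebraically closed field F with char F = 0 or char F coprime to the order of every finite subgroup of G. Then R is simple (as an ungraded algebra) if and only if R is graded simple and the center of R equals F. -/

import Mathlib

/-!
For the forward direction, the centre of a simple algebra is a field; being finite-dimensional
over the algebraically closed field `F`, it is `F`.

Conversely, take an idempotent `e` of degree `1` such that `R e` is a minimal graded left ideal.
Every nonzero homogeneous element of the corner `e R e` has a homogeneous left inverse there, so
the degrees occurring in `e R e` form a subgroup `H`, each homogeneous component of `e R e` is a
line (`F` is algebraically closed), and `dim (e R e) = |H|` is nonzero in `F`. Left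
multiplication by an element of nontrivial degree moves every line to another one and so has
trace zero, while left multiplication by `e` has trace `|H|`; hence the trace form of `e R e` is
nondegenerate. As nilpotent maps have trace zero, `e R e` has no nonzero square-zero ideal, and
since `e` generates `R` as a two-sided ideal, `R` is semiprime. An artinian semiprime algebra is
semisimple, so a two-sided ideal `J` has a complement `K`; the `J`-component of `1 ∈ J ⊕ K` is
then central, hence a scalar, so `J = ⊥` or `J = ⊤`.
-/

open DirectSum

def IsSemiprimeRing (R : Type*) [Ring R] : Prop :=
  ∀ x : R, (∀ r, x * r * x = 0) → x = 0

section Semiprime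

variable {R : Type*} [Ring R]

theorem mul_eq_zero_of_span_singleton_eq_top {e : R} (he : TwoSidedIdeal.span {e} = ⊤)
    {x y : R} (hxy : ∀ r s, x * r * e * s * y = 0) : x * y = 0 := by
  let I : TwoSidedIdeal R := .mk' {t | ∀ r s, x * r * t * s * y = 0}
    (by simp) (fun ha hb r s => by simp [mul_add, add_mul, ha r s, hb r s])
    (fun ha r s => by simp [ha r s])
    (fun {a t} ht r s => by simpa [mul_assoc] using ht (r * a) s)
    (fun {t a} ht r s => by simpa [mul_assoc] using ht r (a * s))
  have hI : TwoSidedIdeal.span {e} ≤ I :=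
    TwoSidedIdeal.span_le.2 (by simpa [I, TwoSidedIdeal.coe_mk'] using hxy)
  have h1 : (1 : R) ∈ TwoSidedIdeal.span {e} := he ▸ TwoSidedIdeal.mem_top R
  simpa [I] using hI h1 1 1

theorem IsSemiprimeRing.eq_bot_of_isNilpotent (hR : IsSemiprimeRing R) {I : Ideal R}
    (hI : IsNilpotent I) : I = ⊥ := by
  suffices ∀ k, I ^ (k + 1) = ⊥ → I = ⊥ by
    obtain ⟨_ | k, hk⟩ := hI
    · have htop : (⊤ : Ideal R) = ⊥ := by simpa [Submodule.pow_zero] using hk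
      exact eq_bot_iff.2 (htop ▸ le_top)
    · exact this k hk
  intro k
  induction k with
  | zero => exact fun h => by rwa [zero_add, Submodule.pow_one] at h
  | succ k ih =>
    refine fun hk => ih (eq_bot_iff.2 fun x hx => hR x fun r => ?_)
    rw [← Submodule.mem_bot R, ← hk, mul_assoc, Submodule.pow_succ]
    exact Ideal.mul_mem_mul hx (I.mul_mem_left r (Ideal.pow_le_self k.succ_ne_zero hx))

theorem IsSemiprimeRing.isSemisimpleRing [IsArtinianRing R] (hR : IsSemiprimeRing R) :
    IsSemisimpleRing R :=
  IsArtinianRing.isSemisimpleRing_iff_jacobson.2 (hR.eq_bot_of_isNilpotent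
    IsSemiprimaryRing.isNilpotent)

end Semiprime

section Center

variable {F R : Type*} [Field F] [Ring R] [Algebra F R]

theorem TwoSidedIdeal.eq_bot_or_eq_top_of_center_eq_bot [IsArtinianRing R]
    (hR : IsSemiprimeRing R) (hZ : Subalgebra.center F R = ⊥) (J : TwoSidedIdeal R) :
    J = ⊥ ∨ J = ⊤ := by
  have := hR.isSemisimpleRing
  obtain ⟨K, hK⟩ := exists_isCompl J.asIdeal
  obtain ⟨c, hc, a, ha, hca⟩ : ∃ c ∈ J.asIdeal, ∃ a ∈ K, c + a = 1 :=
    Submodule.mem_sup.1 (hK.sup_eq_top ▸ Submodule.mem_top)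
  rw [TwoSidedIdeal.mem_asIdeal] at hc
  have hJK : ∀ j ∈ J, ∀ k ∈ K, j * k = 0 := fun j hj k hk =>
    Submodule.disjoint_def.1 hK.disjoint _ (J.mem_asIdeal.2 (J.mul_mem_right _ _ hj))
      (K.mul_mem_left _ hk)
  have hKJ : ∀ k ∈ K, ∀ j ∈ J, k * j = 0 := fun k hk j hj => hR _ fun r => by
    rw [show k * j * r * (k * j) = k * (j * (r * k)) * j by noncomm_ring,
      hJK j hj _ (K.mul_mem_left r hk), mul_zero, zero_mul]
  have hcentral : c ∈ Subalgebra.center F R := Subalgebra.mem_center_iff.2 fun r =>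
    calc r * c = (c + a) * (r * c) := by rw [hca, one_mul]
      _ = c * r * c := by rw [add_mul, hKJ a ha _ (J.mul_mem_left r c hc), add_zero, mul_assoc]
      _ = c * r * (c + a) := by rw [mul_add, mul_assoc c r a, hJK c hc _ (K.mul_mem_left r ha),
          add_zero]
      _ = c * r := by rw [hca, mul_one]
  obtain ⟨μ, rfl⟩ := Algebra.mem_bot.1 (hZ ▸ hcentral)
  rcases eq_or_ne μ 0 with rfl | hμ
  · refine .inl (TwoSidedIdeal.ext fun j => ⟨fun hj => ?_, fun hj => ?_⟩)
    · simpa [← hca, mul_add, hJK j hj a ha] using (mul_one j).symm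
    · simp_all
  · refine .inr (J.one_mem_iff.1 ?_)
    simpa [← map_mul, inv_mul_cancel₀ hμ] using J.mul_mem_left (algebraMap F R μ⁻¹) _ hc

theorem Subalgebra.center_eq_bot_of_isSimpleRing [IsAlgClosed F] [FiniteDimensional F R]
    [IsSimpleRing R] : Subalgebra.center F R = ⊥ := by
  refine eq_bot_iff.2 fun z hz => Algebra.mem_bot.2 ?_
  obtain ⟨μ, hμ⟩ := Module.End.exists_eigenvalue (LinearMap.mulLeft F z)
  obtain ⟨v, hv⟩ := hμ.exists_hasEigenvector
  let w : Subring.center R := ⟨z - algebraMap F R μ, sub_mem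
    (Subring.mem_center_iff.2 (Subalgebra.mem_center_iff.1 hz))
    (Subring.mem_center_iff.2 fun r => (Algebra.commutes μ r).symm)⟩
  have hwv : (w : R) * v = 0 := by
    simpa [w, sub_mul, Algebra.smul_def, sub_eq_zero] using hv.apply_eq_smul
  by_contra hne
  obtain ⟨w', hw'⟩ := (IsSimpleRing.isField_center R).mul_inv_cancel (a := w)
    fun h => hne ⟨μ, (sub_eq_zero.1 (congrArg Subtype.val h)).symm⟩
  apply hv.2
  rw [← one_mul v, ← Subring.coe_one, ← hw', mul_comm, Subring.coe_mul, mul_assoc, hwv,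
    mul_zero]

end Center

section Graded

variable {G F R : Type*} [DecidableEq G] [Field F] [Ring R] [Algebra F R]
  {ℬ : G → Submodule F R} [Decomposition ℬ]

variable (ℬ) in
def IsGraded {S : Type*} [SetLike S R] (I : S) : Prop :=
  ∀ x ∈ I, ∀ g, (decompose ℬ x g : R) ∈ I

theorem exists_decompose_ne_zero {x : R} (hx : x ≠ 0) : ∃ g, (decompose ℬ x g : R) ≠ 0 := by
  classical
  by_contra! h
  exact hx (by rw [← sum_support_decompose ℬ x]; exact Finset.sum_eq_zero fun g _ => h g)

variable [Group G] (hmul : ∀ g h : G, ∀ x ∈ ℬ g, ∀ y ∈ ℬ h, x * y ∈ ℬ (g * h))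
include hmul

theorem decompose_mul_of_mem_right {a : R} {h : G} (ha : a ∈ ℬ h) (x : R) (g : G) :
    (decompose ℬ (x * a) (g * h) : R) = decompose ℬ x g * a := by
  induction x using DirectSum.Decomposition.inductionOn ℬ with
  | zero => simp
  | @homogeneous i m =>
    by_cases hig : i = g
    · subst hig
      rw [decompose_of_mem_same ℬ (hmul _ _ _ m.2 _ ha), decompose_of_mem_same ℬ m.2]
    · rw [decompose_of_mem_ne ℬ (hmul _ _ _ m.2 _ ha) (by simpa using hig),
        decompose_of_mem_ne ℬ m.2 hig, zero_mul]
  | add x y hx hy => simp [add_mul, hx, hy]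

theorem decompose_mul_of_mem_left {a : R} {h : G} (ha : a ∈ ℬ h) (x : R) (g : G) :
    (decompose ℬ (a * x) (h * g) : R) = a * decompose ℬ x g := by
  induction x using DirectSum.Decomposition.inductionOn ℬ with
  | zero => simp
  | @homogeneous i m =>
    by_cases hig : i = g
    · subst hig
      rw [decompose_of_mem_same ℬ (hmul _ _ _ ha _ m.2), decompose_of_mem_same ℬ m.2]
    · rw [decompose_of_mem_ne ℬ (hmul _ _ _ ha _ m.2) (by simpa using hig),
        decompose_of_mem_ne ℬ m.2 hig, mul_zero]
  | add x y hx hy => simp [mul_add, hx, hy]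

theorem isGraded_span {s : Set R} (hs : ∀ x ∈ s, ∃ g, x ∈ ℬ g) :
    IsGraded ℬ (TwoSidedIdeal.span s) := by
  set I := TwoSidedIdeal.span s
  let K : TwoSidedIdeal R := .mk' {x | ∀ g, (decompose ℬ x g : R) ∈ I}
    (by simp) (fun hx hy g => by simpa using I.add_mem (hx g) (hy g))
    (fun hx g => by rw [decompose_neg]; exact I.neg_mem (hx g))
    (fun {r x} hx g => by
      induction r using DirectSum.Decomposition.inductionOn ℬ with
      | zero => simp
      | @homogeneous h a =>
        rw [← mul_inv_cancel_left h g, decompose_mul_of_mem_left hmul a.2]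
        exact I.mul_mem_left _ _ (hx _)
      | add r r' hr hr' => simpa [add_mul] using I.add_mem hr hr')
    (fun {x r} hx g => by
      induction r using DirectSum.Decomposition.inductionOn ℬ with
      | zero => simp
      | @homogeneous h a =>
        rw [← inv_mul_cancel_right g h, decompose_mul_of_mem_right hmul a.2]
        exact I.mul_mem_right _ _ (hx _)
      | add r r' hr hr' => simpa [mul_add] using I.add_mem hr hr')
  have hK (x : R) : x ∈ K ↔ ∀ g, (decompose ℬ x g : R) ∈ I := TwoSidedIdeal.mem_mk' ..
  have hIK : I ≤ K := TwoSidedIdeal.span_le.2 fun x hx => (hK x).2 fun g => by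
    obtain ⟨h, hxh⟩ := hs x hx
    by_cases hhg : h = g
    · subst hhg
      rw [decompose_of_mem_same ℬ hxh]
      exact TwoSidedIdeal.subset_span hx
    · simp [decompose_of_mem_ne ℬ hxh hhg]
  exact fun x hx => (hK x).1 (hIK hx)

theorem span_singleton_eq_top_of_mem
    (hgr : ∀ J : TwoSidedIdeal R, IsGraded ℬ J → J = ⊥ ∨ J = ⊤)
    {z : R} {g : G} (hz : z ∈ ℬ g) (hz0 : z ≠ 0) : TwoSidedIdeal.span {z} = ⊤ := by
  refine (hgr _ (isGraded_span hmul (by simpa using ⟨g, hz⟩))).resolve_left fun h => hz0 ?_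
  simpa [h] using (TwoSidedIdeal.subset_span rfl : z ∈ TwoSidedIdeal.span {z})

theorem IsGraded.map_toSpanSingleton {I : Ideal R} (hI : IsGraded ℬ I) {d : R} {k : G}
    (hd : d ∈ ℬ k) : IsGraded ℬ (Submodule.map (LinearMap.toSpanSingleton R R d) I) := by
  rintro _ ⟨x, hx, rfl⟩ g
  refine ⟨_, hI x hx (g * k⁻¹), ?_⟩
  rw [LinearMap.toSpanSingleton_apply, smul_eq_mul, ← decompose_mul_of_mem_right hmul hd,
    inv_mul_cancel_right, LinearMap.toSpanSingleton_apply, smul_eq_mul]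

theorem IsGraded.inf_ker_toSpanSingleton {I : Ideal R} (hI : IsGraded ℬ I) {d : R} {k : G}
    (hd : d ∈ ℬ k) : IsGraded ℬ (I ⊓ LinearMap.ker (LinearMap.toSpanSingleton R R d)) := by
  rintro x ⟨hxI, hxd⟩ g
  refine ⟨hI x hxI g, ?_⟩
  simp_all [← decompose_mul_of_mem_right hmul hd]

theorem isGraded_span_singleton {d : R} {k : G} (hd : d ∈ ℬ k) :
    IsGraded ℬ (Ideal.span {d}) := by
  rw [Ideal.span, LinearMap.span_singleton_eq_range, ← Submodule.map_top]
  exact IsGraded.map_toSpanSingleton hmul (fun _ _ _ => Submodule.mem_top) hd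

theorem IsGraded.exists_mul_ne_zero
    (hgr : ∀ J : TwoSidedIdeal R, IsGraded ℬ J → J = ⊥ ∨ J = ⊤) {I : Ideal R}
    (hI : IsGraded ℬ I) (hI0 : I ≠ ⊥) :
    ∃ z ∈ I, ∃ d ∈ I, ∃ k, d ∈ ℬ k ∧ z * d ≠ 0 := by
  obtain ⟨z, g, hz, hzI, hz0⟩ : ∃ z g, z ∈ ℬ g ∧ z ∈ I ∧ z ≠ 0 := by
    obtain ⟨x, hxI, hx0⟩ := Submodule.exists_mem_ne_zero_of_ne_bot hI0
    obtain ⟨g, hg⟩ := exists_decompose_ne_zero (ℬ := ℬ) hx0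
    exact ⟨_, g, SetLike.coe_mem _, hI x hxI g, hg⟩
  by_contra! H
  have hz : z * 1 = 0 := mul_eq_zero_of_span_singleton_eq_top
    (span_singleton_eq_top_of_mem hmul hgr hz hz0) fun r s => ?_
  · exact hz0 (by simpa using hz)
  suffices z * r * z = 0 by simp [this]
  induction r using DirectSum.Decomposition.inductionOn ℬ with
  | zero => simp
  | @homogeneous h a =>
    rw [mul_assoc]
    exact H z hzI _ (I.mul_mem_left _ hzI) _ (hmul _ _ _ a.2 _ hz)
  | add r r' hr hr' => simp [mul_add, add_mul, hr, hr']

theorem exists_isIdempotentElem_minimal [FiniteDimensional F R] [Nontrivial R]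
    (hgr : ∀ J : TwoSidedIdeal R, IsGraded ℬ J → J = ⊥ ∨ J = ⊤) :
    ∃ e : R, IsIdempotentElem e ∧ e ∈ ℬ 1 ∧
      Minimal (fun I : Ideal R => IsGraded ℬ I ∧ I ≠ ⊥) (Ideal.span {e}) := by
  have : IsArtinianRing R := IsArtinianRing.of_finite F R
  obtain ⟨I, ⟨hIgr, hI0⟩, hImin⟩ := exists_minimal_of_wellFoundedLT
    (fun I : Ideal R => IsGraded ℬ I ∧ I ≠ ⊥) ⟨⊤, fun _ _ _ => trivial, top_ne_bot⟩
  obtain ⟨z, hzI, d, hdI, k, hd, hzd⟩ := hIgr.exists_mul_ne_zero hmul hgr hI0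
  -- the left annihilator of `d` in `I` is a graded left ideal not containing `z`
  have hinj : ∀ y ∈ I, y * d = 0 → y = 0 := by
    have : I ⊓ LinearMap.ker (LinearMap.toSpanSingleton R R d) = ⊥ := by
      by_contra hne
      have := hImin ⟨hIgr.inf_ker_toSpanSingleton hmul hd, hne⟩ inf_le_left hzI
      exact hzd (by simpa using (Submodule.mem_inf.1 this).2)
    exact fun y hy hyd => by simpa using this.le ⟨hy, by simpa using hyd⟩
  -- `I * d` is a nonzero graded left ideal inside `I`, hence equal to `I`
  obtain ⟨e, heI, hed⟩ : d ∈ Submodule.map (LinearMap.toSpanSingleton R R d) I :=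
    hImin ⟨hIgr.map_toSpanSingleton hmul hd, fun h => hzd (by
      simpa [h] using Submodule.mem_map_of_mem (f := LinearMap.toSpanSingleton R R d) hzI)⟩
      (Submodule.map_le_iff_le_comap.2 fun y _ => I.mul_mem_left y hdI) hdI
  simp only [LinearMap.toSpanSingleton_apply, smul_eq_mul] at hed
  have he : IsIdempotentElem e := sub_eq_zero.1 <| hinj _ (I.sub_mem (I.mul_mem_left e heI) heI)
    (by rw [sub_mul, mul_assoc, hed, hed, sub_self])
  have he1 : e ∈ ℬ 1 := by
    have h := decompose_mul_of_mem_right hmul hd e 1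
    rw [one_mul, hed, decompose_of_mem_same ℬ hd] at h
    have := hinj _ (I.sub_mem (hIgr e heI 1) heI) (by rw [sub_mul, ← h, hed, sub_self])
    exact sub_eq_zero.1 this ▸ SetLike.coe_mem _
  have he0 : e ≠ 0 := by
    rintro rfl
    exact hzd (by rw [← hed, zero_mul, mul_zero])
  have heI' : Ideal.span {e} ≤ I := (Ideal.span_singleton_le_iff_mem I).2 heI
  have hspan : Ideal.span {e} = I :=
    le_antisymm heI' (hImin ⟨isGraded_span_singleton hmul he1, by simpa using he0⟩ heI')
  exact ⟨e, he, he1, hspan ▸ ⟨⟨hIgr, hI0⟩, hImin⟩⟩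

end Graded

section Corner

variable {F R : Type*} [Field F] [Ring R] [Algebra F R]

variable (F) in
def corner (e : R) : Submodule F R where
  carrier := {x | e * x = x ∧ x * e = x}
  add_mem' hx hy := ⟨by rw [mul_add, hx.1, hy.1], by rw [add_mul, hx.2, hy.2]⟩
  zero_mem' := ⟨mul_zero e, zero_mul e⟩
  smul_mem' c x hx := ⟨by rw [mul_smul_comm, hx.1], by rw [smul_mul_assoc, hx.2]⟩

variable {e : R}

theorem mul_mem_corner {x y : R} (hx : x ∈ corner F e) (hy : y ∈ corner F e) :
    x * y ∈ corner F e :=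
  ⟨by rw [← mul_assoc, hx.1], by rw [mul_assoc, hy.2]⟩

theorem IsIdempotentElem.mem_corner (he : IsIdempotentElem e) : e ∈ corner F e := ⟨he, he⟩

theorem IsIdempotentElem.mul_mul_mem_corner (he : IsIdempotentElem e) (x : R) :
    e * x * e ∈ corner F e :=
  ⟨by rw [← mul_assoc, ← mul_assoc, he.eq], by rw [mul_assoc, he.eq]⟩

variable (F) in
/-- `y ↦ e * x * y` on `e R e`: multiplying by `e` first makes this linear in every `x : R`,
and it agrees with `y ↦ x * y` when `x ∈ e R e`. -/
noncomputable def IsIdempotentElem.cornerMulLeft (he : IsIdempotentElem e) :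
    R →ₗ[F] Module.End F (corner F e) :=
  LinearMap.codRestrict₂
    ((LinearMap.mul F R).compl₂ (corner F e).subtype ∘ₗ LinearMap.mulLeft F e)
    (corner F e).subtype (corner F e).injective_subtype fun x y => by
      have := mul_mem_corner (he.mul_mul_mem_corner x) y.2
      rw [mul_assoc _ e, y.2.1] at this
      simpa using this

theorem IsIdempotentElem.cornerMulLeft_apply (he : IsIdempotentElem e) (x : R)
    (y : corner F e) : (he.cornerMulLeft F x y : R) = e * x * y := by
  change (corner F e).subtype _ = _
  rw [IsIdempotentElem.cornerMulLeft, LinearMap.codRestrict₂_apply]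
  simp

theorem IsIdempotentElem.isSemiprimeRing_of_corner (he : IsIdempotentElem e)
    (hspan : TwoSidedIdeal.span {e} = ⊤)
    (hnd : ∀ y ∈ corner F e,
      (∀ z ∈ corner F e, LinearMap.trace F _ (he.cornerMulLeft F (z * y)) = 0) → y = 0) :
    IsSemiprimeRing R := by
  intro x hx
  -- `e * a * x * b * e` spans a square-zero ideal of `e R e`
  have hcorner (a b : R) : e * a * x * b * e = 0 := by
    have hyy (r : R) : e * a * x * b * e * r * (e * a * x * b * e) = 0 :=
      calc _ = e * a * (x * (b * e * r * e * a) * x) * b * e := by simp only [mul_assoc]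
        _ = 0 := by rw [hx, mul_zero, zero_mul, zero_mul]
    refine hnd _ (by simpa only [mul_assoc] using he.mul_mul_mem_corner (a * x * b))
      fun z hz => (LinearMap.isNilpotent_trace_of_isNilpotent
        ⟨2, LinearMap.ext fun w => Subtype.ext ?_⟩).eq_zero
    rw [pow_two, Module.End.mul_apply, he.cornerMulLeft_apply, he.cornerMulLeft_apply,
      ← mul_assoc e z, hz.1]
    calc _ = z * (e * a * x * b * e * z * (e * a * x * b * e)) * w := by simp only [mul_assoc]
      _ = 0 := by rw [hyy, mul_zero, zero_mul]
  have hleft (r s : R) : r * e * s * x = 0 := by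
    simpa using mul_eq_zero_of_span_singleton_eq_top hspan (x := r * e * s * x) (y := 1)
      fun r' s' => by
        calc _ = r * (e * s * x * r' * e) * s' := by simp only [mul_assoc, mul_one]
          _ = 0 := by rw [hcorner, mul_zero, zero_mul]
  simpa using mul_eq_zero_of_span_singleton_eq_top hspan (x := 1) (y := x)
    fun r s => by simpa [mul_assoc] using hleft r s

end Corner

section GradedCorner

variable {G F R : Type*} [Group G] [DecidableEq G] [Field F] [Ring R] [Algebra F R]
  {ℬ : G → Submodule F R} [Decomposition ℬ]
  (hmul : ∀ g h : G, ∀ x ∈ ℬ g, ∀ y ∈ ℬ h, x * y ∈ ℬ (g * h))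
  {e : R} (he : IsIdempotentElem e) (he1 : e ∈ ℬ 1)
  (hmin : Minimal (fun I : Ideal R => IsGraded ℬ I ∧ I ≠ ⊥) (Ideal.span {e}))

include hmul he1 in
theorem isGraded_corner : IsGraded ℬ (corner F e) := by
  intro x hx g
  have hl := decompose_mul_of_mem_left hmul he1 x g
  have hr := decompose_mul_of_mem_right hmul he1 x g
  rw [one_mul, hx.1] at hl
  rw [mul_one, hx.2] at hr
  exact ⟨hl.symm, hr.symm⟩

include hmul he he1 hmin in
theorem exists_mul_eq_of_mem_corner {d : R} {g : G} (hd : d ∈ corner F e) (hdg : d ∈ ℬ g)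
    (hd0 : d ≠ 0) : ∃ d' ∈ corner F e, d' ∈ ℬ g⁻¹ ∧ d' * d = e := by
  have hle : Ideal.span {d} ≤ Ideal.span {e} := (Ideal.span_singleton_le_iff_mem _).2
    (hd.2 ▸ Ideal.mul_mem_left _ d (Ideal.mem_span_singleton_self e))
  -- minimality gives `R d = R e`; the inverse is the degree-`g⁻¹` part of `r` in `r d = e`
  obtain ⟨r, hr⟩ := Ideal.mem_span_singleton'.1 <| hmin.2
    ⟨isGraded_span_singleton hmul hdg, by simpa using hd0⟩ hle (Ideal.mem_span_singleton_self e)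
  have h := decompose_mul_of_mem_right hmul hdg r g⁻¹
  rw [inv_mul_cancel, hr, decompose_of_mem_same ℬ he1] at h
  refine ⟨e * decompose ℬ r g⁻¹ * e, he.mul_mul_mem_corner _, ?_, ?_⟩
  · simpa using hmul _ _ _ (hmul _ _ _ he1 _ (SetLike.coe_mem _)) _ he1
  · rw [mul_assoc _ e, hd.1, mul_assoc, ← h, he.eq]

include hmul he he1 hmin in
theorem exists_smul_eq_of_mem_corner_of_mem_one [IsAlgClosed F] [FiniteDimensional F R] {d : R}
    (hd : d ∈ corner F e) (hd1 : d ∈ ℬ 1) : ∃ c : F, c • e = d := by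
  have he0 : e ≠ 0 := fun h => hmin.1.2 (by simp [h])
  have : Nontrivial (corner F e) :=
    ⟨⟨⟨e, he.mem_corner⟩, 0, fun h => he0 (congrArg Subtype.val h)⟩⟩
  obtain ⟨μ, hμ⟩ := Module.End.exists_eigenvalue (he.cornerMulLeft F d)
  obtain ⟨v, hv⟩ := hμ.exists_hasEigenvector
  have hdv : (d - μ • e) * v = 0 := by
    have := congrArg Subtype.val hv.apply_eq_smul
    rw [he.cornerMulLeft_apply, hd.1] at this
    rw [sub_mul, smul_mul_assoc, v.2.1, this, SetLike.val_smul, sub_self]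
  by_contra! hne
  obtain ⟨w, -, -, hw⟩ := exists_mul_eq_of_mem_corner hmul he he1 hmin
    (sub_mem hd (Submodule.smul_mem _ μ he.mem_corner))
    (sub_mem hd1 (Submodule.smul_mem _ μ he1))
    (sub_ne_zero.2 (hne μ).symm)
  refine hv.2 (Subtype.ext ?_)
  calc (v : R) = w * (d - μ • e) * v := by rw [hw, v.2.1]
    _ = 0 := by rw [mul_assoc, hdv, mul_zero]

include hmul he he1 hmin in
theorem exists_smul_eq_of_mem_corner [IsAlgClosed F] [FiniteDimensional F R] {u y : R} {g : G}
    (hu : u ∈ corner F e) (hug : u ∈ ℬ g) (hu0 : u ≠ 0) (hy : y ∈ corner F e)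
    (hyg : y ∈ ℬ g) : ∃ c : F, c • u = y := by
  obtain ⟨u', hu', hu'g, hu'u⟩ := exists_mul_eq_of_mem_corner hmul he he1 hmin hu hug hu0
  obtain ⟨c, hc⟩ := exists_smul_eq_of_mem_corner_of_mem_one hmul he he1 hmin
    (mul_mem_corner hy hu') (by simpa using hmul _ _ _ hyg _ hu'g)
  refine ⟨c, ?_⟩
  rw [← hu.1, ← smul_mul_assoc, hc, mul_assoc, hu'u, hy.2]

include hmul he he1 hmin in
theorem exists_subgroup_support_corner :
    ∃ H : Subgroup G, ∀ g, g ∈ H ↔ ∃ x ∈ corner F e, x ∈ ℬ g ∧ x ≠ 0 := by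
  have he0 : e ≠ 0 := fun h => hmin.1.2 (by simp [h])
  refine ⟨{ carrier := {g | ∃ x ∈ corner F e, x ∈ ℬ g ∧ x ≠ 0}
            one_mem' := ⟨e, he.mem_corner, he1, he0⟩
            mul_mem' := ?_
            inv_mem' := ?_ }, fun g => Iff.rfl⟩
  · rintro a b ⟨x, hx, hxa, hx0⟩ ⟨y, hy, hyb, hy0⟩
    obtain ⟨x', -, -, hx'x⟩ := exists_mul_eq_of_mem_corner hmul he he1 hmin hx hxa hx0
    refine ⟨x * y, mul_mem_corner hx hy, hmul _ _ _ hxa _ hyb, fun hxy => hy0 ?_⟩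
    rw [← hy.1, ← hx'x, mul_assoc, hxy, mul_zero]
  · rintro a ⟨x, hx, hxa, hx0⟩
    obtain ⟨x', hx', hx'a, hx'x⟩ := exists_mul_eq_of_mem_corner hmul he he1 hmin hx hxa hx0
    exact ⟨x', hx', hx'a, fun h => he0 (by rw [← hx'x, h, zero_mul])⟩

include hmul he he1 hmin in
theorem exists_basis_corner [IsAlgClosed F] [FiniteDimensional F R] {H : Subgroup G}
    (hH : ∀ g, g ∈ H ↔ ∃ x ∈ corner F e, x ∈ ℬ g ∧ x ≠ 0) :
    ∃ b : Module.Basis H F (corner F e), ∀ h : H, (b h : R) ∈ ℬ h := by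
  classical
  choose u hu hug hu0 using fun h : H => (hH h).1 h.2
  let v : H → corner F e := fun h => ⟨u h, hu h⟩
  have hli : LinearIndependent F v := LinearIndependent.of_comp (corner F e).subtype <|
    ((Decomposition.isInternal ℬ).submodule_iSupIndep.comp
      Subtype.val_injective).linearIndependent _ hug hu0
  have hsp : ⊤ ≤ Submodule.span F (Set.range v) := by
    rintro ⟨x, hx⟩ -
    have hxg (g : G) : (decompose ℬ x g : R) ∈ corner F e := isGraded_corner hmul he1 x hx g
    have : (⟨x, hx⟩ : corner F e) = ∑ g ∈ (decompose ℬ x).support, ⟨_, hxg g⟩ :=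
      Subtype.ext (by rw [Submodule.coe_sum]; exact (sum_support_decompose ℬ x).symm)
    rw [this]
    refine Submodule.sum_mem _ fun g _ => ?_
    by_cases hg0 : (decompose ℬ x g : R) = 0
    · rw [show (⟨_, hxg g⟩ : corner F e) = 0 from Subtype.ext hg0]
      exact Submodule.zero_mem _
    have hg : g ∈ H := (hH g).2 ⟨_, hxg g, SetLike.coe_mem _, hg0⟩
    obtain ⟨c, hc⟩ := exists_smul_eq_of_mem_corner hmul he he1 hmin (hu ⟨g, hg⟩)
      (hug ⟨g, hg⟩) (hu0 ⟨g, hg⟩) (hxg g) (SetLike.coe_mem _)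
    have : (⟨_, hxg g⟩ : corner F e) = c • v ⟨g, hg⟩ := Subtype.ext hc.symm
    rw [this]
    exact Submodule.smul_mem _ c (Submodule.subset_span ⟨_, rfl⟩)
  exact ⟨Module.Basis.mk hli hsp, fun h => by simpa using hug h⟩

include hmul he1 hmin in
theorem trace_cornerMulLeft_eq_zero [IsAlgClosed F] [FiniteDimensional F R] {H : Subgroup G}
    (hH : ∀ g, g ∈ H ↔ ∃ x ∈ corner F e, x ∈ ℬ g ∧ x ≠ 0)
    (b : Module.Basis H F (corner F e)) (hb : ∀ h : H, (b h : R) ∈ ℬ h) {x : R} {k : G}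
    (hx : x ∈ corner F e) (hxk : x ∈ ℬ k)
    (hk : k ≠ 1) : LinearMap.trace F _ (he.cornerMulLeft F x) = 0 := by
  classical
  have : Fintype H := @Fintype.ofFinite _ (Module.Finite.finite_basis b)
  rw [LinearMap.trace_eq_matrix_trace F b, Matrix.trace]
  refine Finset.sum_eq_zero fun h _ => ?_
  rw [Matrix.diag_apply, LinearMap.toMatrix_apply]
  set y := he.cornerMulLeft F x (b h)
  have hy : (y : R) ∈ ℬ (k * h) := by
    rw [he.cornerMulLeft_apply, hx.1]
    exact hmul _ _ _ hxk _ (hb h)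
  by_cases hy0 : (y : R) = 0
  · simp [show y = 0 from Subtype.ext hy0]
  have hkh : k * h ∈ H := (hH _).2 ⟨y, y.2, hy, hy0⟩
  obtain ⟨c, hc⟩ := exists_smul_eq_of_mem_corner hmul he he1 hmin (b ⟨k * h, hkh⟩).2
    (hb ⟨k * h, hkh⟩) (by simpa using b.ne_zero ⟨k * h, hkh⟩) y.2 hy
  have hne : (⟨k * h, hkh⟩ : H) ≠ h := fun hkh' =>
    hk (by simpa using congrArg Subtype.val hkh')
  rw [show y = c • b ⟨k * h, hkh⟩ from Subtype.ext hc.symm, map_smul, b.repr_self,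
    Finsupp.smul_apply, Finsupp.single_apply, if_neg hne, smul_zero]

include hmul he he1 hmin in
theorem eq_zero_of_forall_trace_cornerMulLeft_eq_zero [IsAlgClosed F] [FiniteDimensional F R]
    {H : Subgroup G} (hH : ∀ g, g ∈ H ↔ ∃ x ∈ corner F e, x ∈ ℬ g ∧ x ≠ 0)
    (b : Module.Basis H F (corner F e)) (hb : ∀ h : H, (b h : R) ∈ ℬ h)
    (hn : (Module.finrank F (corner F e) : F) ≠ 0) {y : R} (hy : y ∈ corner F e)
    (h : ∀ z ∈ corner F e, LinearMap.trace F _ (he.cornerMulLeft F (z * y)) = 0) : y = 0 := by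
  classical
  by_contra hy0
  obtain ⟨g, hg⟩ := exists_decompose_ne_zero (ℬ := ℬ) hy0
  have hyk (k : G) : (decompose ℬ y k : R) ∈ corner F e := isGraded_corner hmul he1 y hy k
  obtain ⟨s, hs, hsg, hsy⟩ :=
    exists_mul_eq_of_mem_corner hmul he he1 hmin (hyk g) (SetLike.coe_mem _) hg
  have hoff (k : G) (_ : k ∈ (decompose ℬ y).support) (hkg : k ≠ g) :
      LinearMap.trace F _ (he.cornerMulLeft F (s * decompose ℬ y k)) = 0 :=
    trace_cornerMulLeft_eq_zero hmul he he1 hmin hH b hb (mul_mem_corner hs (hyk k))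
      (hmul _ _ _ hsg _ (SetLike.coe_mem _)) (by rwa [Ne, inv_mul_eq_one, eq_comm])
  have hid : he.cornerMulLeft F e = LinearMap.id :=
    LinearMap.ext fun w => Subtype.ext (by rw [he.cornerMulLeft_apply, he.eq, w.2.1]; rfl)
  refine hn ?_
  calc (Module.finrank F (corner F e) : F)
      = LinearMap.trace F _ (he.cornerMulLeft F (s * decompose ℬ y g)) := by
        rw [hsy, hid, LinearMap.trace_id]
    _ = ∑ k ∈ (decompose ℬ y).support,
          LinearMap.trace F _ (he.cornerMulLeft F (s * decompose ℬ y k)) :=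
        (Finset.sum_eq_single_of_mem g (by simpa using hg) hoff).symm
    _ = LinearMap.trace F _ (he.cornerMulLeft F (s * y)) := by
        rw [← map_sum, ← map_sum, ← Finset.mul_sum, sum_support_decompose]
    _ = 0 := h s hs

end GradedCorner

theorem natCast_ne_zero_of_ringChar {F : Type*} [Field F] {n : ℕ} (hn : n ≠ 0)
    (h : ringChar F = 0 ∨ (ringChar F).Coprime n) : (n : F) ≠ 0 := by
  intro h0
  have hdvd := (ringChar.spec F n).1 h0
  rcases h with h | h
  · exact hn (Nat.eq_zero_of_zero_dvd (h ▸ hdvd))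
  · exact CharP.ringChar_ne_one (h.eq_one_of_dvd hdvd)

theorem isSemiprimeRing_of_isGradedSimple {G F R : Type*} [Group G] [DecidableEq G] [Field F]
    [IsAlgClosed F] [Ring R] [Nontrivial R] [Algebra F R] [FiniteDimensional F R]
    {ℬ : G → Submodule F R} [Decomposition ℬ]
    (hmul : ∀ g h : G, ∀ x ∈ ℬ g, ∀ y ∈ ℬ h, x * y ∈ ℬ (g * h))
    (hchar : ringChar F = 0 ∨
      ∀ H : Subgroup G, Finite H → Nat.Coprime (ringChar F) (Nat.card H))
    (hgr : ∀ J : TwoSidedIdeal R, IsGraded ℬ J → J = ⊥ ∨ J = ⊤) :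
    IsSemiprimeRing R := by
  obtain ⟨e, he, he1, hmin⟩ := exists_isIdempotentElem_minimal hmul hgr
  have he0 : e ≠ 0 := fun h => hmin.1.2 (by simp [h])
  obtain ⟨H, hH⟩ := exists_subgroup_support_corner hmul he he1 hmin
  obtain ⟨b, hb⟩ := exists_basis_corner hmul he he1 hmin hH
  have : Finite H := Module.Finite.finite_basis b
  have hn : (Module.finrank F (corner F e) : F) ≠ 0 := by
    rw [Module.finrank_eq_nat_card_basis b]
    exact natCast_ne_zero_of_ringChar Nat.card_pos.ne' (hchar.imp_right fun h => h H this)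
  exact he.isSemiprimeRing_of_corner (span_singleton_eq_top_of_mem hmul hgr he1 he0)
    fun y hy => eq_zero_of_forall_trace_cornerMulLeft_eq_zero hmul he he1 hmin hH b hb hn hy

theorem stmt_19_general {G : Type*} [Group G] [DecidableEq G] {F : Type*} [Field F] [IsAlgClosed F]
    {R : Type*} [Ring R] [Algebra F R] [FiniteDimensional F R]
    (ℬ : G → Submodule F R) [DirectSum.Decomposition ℬ]
    (hmul : ∀ g h : G, ∀ x ∈ ℬ g, ∀ y ∈ ℬ h, x * y ∈ ℬ (g * h))
    -- `char F = 0` or `char F` is coprime to the order of every finite subgroup of `G`: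
    (hchar : ringChar F = 0 ∨
      ∀ H : Subgroup G, Finite H → Nat.Coprime (ringChar F) (Nat.card H)) :
    -- `R` is simple ...
    ((∃ x y : R, x * y ≠ 0) ∧ ∀ J : TwoSidedIdeal R, J = ⊥ ∨ J = ⊤) ↔
      -- ... iff `R` is graded simple and the center of `R` equals `F`:
      ((∃ x y : R, x * y ≠ 0) ∧
        (∀ J : TwoSidedIdeal R,
          (∀ x ∈ J, ∀ g : G, ((DirectSum.decompose ℬ x) g : R) ∈ J) → J = ⊥ ∨ J = ⊤)) ∧
      Subalgebra.center F R = ⊥ := by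
  refine ⟨fun ⟨⟨x, y, hxy⟩, hs⟩ => ?_, fun ⟨⟨⟨x, y, hxy⟩, hgr⟩, hZ⟩ => ?_⟩ <;>
    have : Nontrivial R := nontrivial_of_ne _ _ hxy
  · have : IsSimpleRing R := ⟨{ eq_bot_or_eq_top := hs }⟩
    exact ⟨⟨⟨x, y, hxy⟩, fun J _ => hs J⟩, Subalgebra.center_eq_bot_of_isSimpleRing⟩
  · have : IsArtinianRing R := IsArtinianRing.of_finite F R
    exact ⟨⟨x, y, hxy⟩, TwoSidedIdeal.eq_bot_or_eq_top_of_center_eq_bot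
      (isSemiprimeRing_of_isGradedSimple hmul hchar hgr) hZ⟩

/-- Under the standing characteristic assumption, a finite-dimensional `G`-graded
algebra over an algebraically closed field is simple (as an ungraded algebra) if and
only if it is graded simple and its center equals `F`. -/
theorem stmt_19 {G : Type*} [Group G] [DecidableEq G] {F : Type*} [Field F] [IsAlgClosed F]
    {R : Type*} [Ring R] [Algebra F R] [FiniteDimensional F R]
    (ℬ : G → Submodule F R) [DirectSum.Decomposition ℬ]
    (hmul : ∀ g h : G, ∀ x ∈ ℬ g, ∀ y ∈ ℬ h, x * y ∈ ℬ (g * h))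
    (hone : (1 : R) ∈ ℬ (1 : G))
    -- `char F = 0` or `char F` is coprime to the order of every finite subgroup of `G`:
    (hchar : ringChar F = 0 ∨
      ∀ H : Subgroup G, Finite H → Nat.Coprime (ringChar F) (Nat.card H)) :
    -- `R` is simple ...
    ((∃ x y : R, x * y ≠ 0) ∧ ∀ J : TwoSidedIdeal R, J = ⊥ ∨ J = ⊤) ↔
      -- ... iff `R` is graded simple and the center of `R` equals `F`:
      ((∃ x y : R, x * y ≠ 0) ∧
        (∀ J : TwoSidedIdeal R,
          (∀ x ∈ J, ∀ g : G, ((DirectSum.decompose ℬ x) g : R) ∈ J) → J = ⊥ ∨ J = ⊤)) ∧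
      Subalgebra.center F R = ⊥ :=
  stmt_19_general ℬ hmul hchar
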